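/- Let k ≥ 1 and let ∂ : ℤ^{k+1} → ℤ^k be the ℤ-linear map with ∂e_0 = f_1, ∂e_i = 2·f_i − f_{i+1} for 1 ≤ i ≤ k−1, and ∂e_k = f_k. Then every nonzero element z of the kernel of ∂ has e_0-coefficient of absolute value at least 2^{k−1}. In particular, every generator of the kernel of ∂ has a coefficient whose absolute value equals 2^{k−1}, i.e., is exponential in k. -/

import Mathlib

/-!
In the coordinates `z₀, …, z_k`, the `j`-th coordinate of `∂z` only involves `z_j` and `z_{j+1}`,
and `z_j` enters with coefficient `±1`. Hence a cycle is determined by its last coordinate, going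
downwards, and the kernel of `∂` is spanned by `(-2^{k-1}, 2^{k-2}, …, 2, 1, 1)`: each step down
the chain doubles the coefficient.
-/

open Submodule

section Bidiagonal

variable {R : Type*} [CommRing R] {k : ℕ}

def bidiagonalMap (a b : Fin k → R) : (Fin (k + 1) → R) →ₗ[R] (Fin k → R) where
  toFun z j := a j * z j.castSucc + b j * z j.succ
  map_add' z w := by ext j; simp only [Pi.add_apply]; ring
  map_smul' c z := by ext j; simp only [Pi.smul_apply, smul_eq_mul, RingHom.id_apply]; ring

@[simp]
theorem bidiagonalMap_apply (a b : Fin k → R) (z : Fin (k + 1) → R) (j : Fin k) :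
    bidiagonalMap a b z j = a j * z j.castSucc + b j * z j.succ := rfl

variable [IsDomain R] {a b : Fin k → R}

theorem eq_zero_of_bidiagonalMap_eq_zero (ha : ∀ j, a j ≠ 0) {w : Fin (k + 1) → R}
    (hw : bidiagonalMap a b w = 0) (hlast : w (Fin.last k) = 0) : w = 0 := by
  funext i
  change w i = 0
  induction i using Fin.reverseInduction with
  | last => exact hlast
  | cast j ih =>
    have hj : a j * w j.castSucc + b j * w j.succ = 0 := congrFun hw j
    rw [ih, mul_zero, add_zero] at hj
    exact (mul_eq_zero.mp hj).resolve_left (ha j)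

theorem ker_bidiagonalMap (ha : ∀ j, a j ≠ 0) {v : Fin (k + 1) → R}
    (hv : bidiagonalMap a b v = 0) (hv_last : v (Fin.last k) = 1) :
    LinearMap.ker (bidiagonalMap a b) = R ∙ v := by
  refine le_antisymm (fun z hz => ?_) ((span_singleton_le_iff_mem _ _).mpr hv)
  have hzv : z - z (Fin.last k) • v = 0 :=
    eq_zero_of_bidiagonalMap_eq_zero (b := b) ha
      (by rw [map_sub, map_smul, LinearMap.mem_ker.mp hz, hv, smul_zero, sub_zero])
      (by simp [hv_last])
  exact mem_span_singleton.mpr ⟨z (Fin.last k), (sub_eq_zero.mp hzv).symm⟩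

end Bidiagonal

/-- The map `∂`, with coordinate `j` standing for `f_{j+1}`: `(∂z)_j = z_j + 2 z_{j+1}` for
`j = 0` and `-z_j + 2 z_{j+1}` otherwise, except that the factor `2` becomes `1` at the last coordinate `j = k - 1`. -/
def boundary (k : ℕ) : (Fin (k + 1) → ℤ) →ₗ[ℤ] (Fin k → ℤ) :=
  bidiagonalMap (fun j => if (j : ℕ) = 0 then 1 else -1)
    (fun j => if (j : ℕ) + 1 = k then 1 else 2)

def boundaryCycle (k : ℕ) : Fin (k + 1) → ℤ :=
  fun i => if (i : ℕ) = 0 then -2 ^ (k - 1) else 2 ^ (k - 1 - i)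

theorem boundary_boundaryCycle (k : ℕ) : boundary k (boundaryCycle k) = 0 := by
  funext j
  obtain ⟨j, hj⟩ := j
  simp only [boundary, boundaryCycle, bidiagonalMap_apply, Fin.val_castSucc, Fin.val_succ,
    Pi.zero_apply]
  rcases Nat.eq_zero_or_pos j with rfl | hj0
  · rcases eq_or_ne k 1 with rfl | hk
    · simp
    · obtain ⟨m, rfl⟩ : ∃ m, k = m + 2 := ⟨k - 2, by omega⟩
      simp [pow_succ]
      ring
  · rcases eq_or_ne (j + 1) k with rfl | hk
    · simp [hj0.ne']
    · obtain ⟨m, hm⟩ : ∃ m, k - 1 - j = m + 1 := ⟨k - 2 - j, by omega⟩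
      have : k - 1 - (j + 1) = m := by omega
      simp [hj0.ne', hk, hm, this, pow_succ]
      ring

theorem boundaryCycle_last {k : ℕ} (hk : k ≠ 0) : boundaryCycle k (Fin.last k) = 1 := by
  simp [boundaryCycle, hk]

theorem ker_boundary {k : ℕ} (hk : k ≠ 0) : LinearMap.ker (boundary k) = ℤ ∙ boundaryCycle k :=
  ker_bidiagonalMap (fun j => by split_ifs <;> decide) (boundary_boundaryCycle k)
    (boundaryCycle_last hk)

/-- Let `k ≥ 1` and let `∂ : ℤ^{k+1} → ℤ^k` be the ℤ-linear map with `∂e_0 = f_1`,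
`∂e_i = 2·f_i − f_{i+1}` for `1 ≤ i ≤ k−1`, and `∂e_k = f_k`.  Then every nonzero element
`z` of the kernel of `∂` has `e_0`-coefficient of absolute value at least `2^{k−1}`.
In particular, every generator of the kernel of `∂` has a coefficient whose absolute value
equals `2^{k−1}`, i.e. is exponential in `k`. -/
theorem ker_coefficients_exponential (k : ℕ) (hk : 1 ≤ k)
    (D : (Fin (k + 1) → ℤ) →ₗ[ℤ] (Fin k → ℤ))
    (hD0 : D (Pi.single (⟨0, by omega⟩ : Fin (k + 1)) 1) =
      Pi.single (⟨0, by omega⟩ : Fin k) 1)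
    (hDmid : ∀ (i : ℕ) (_h1 : 1 ≤ i) (_h2 : i ≤ k - 1),
      D (Pi.single (⟨i, by omega⟩ : Fin (k + 1)) 1) =
        (2 : ℤ) • Pi.single (⟨i - 1, by omega⟩ : Fin k) 1
          - Pi.single (⟨i, by omega⟩ : Fin k) 1)
    (hDk : D (Pi.single (⟨k, by omega⟩ : Fin (k + 1)) 1) =
      Pi.single (⟨k - 1, by omega⟩ : Fin k) 1) :
    (∀ z : Fin (k + 1) → ℤ, D z = 0 → z ≠ 0 →
        (2 : ℤ) ^ (k - 1) ≤ |z ⟨0, by omega⟩|) ∧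
      ∀ z : Fin (k + 1) → ℤ, LinearMap.ker D = Submodule.span ℤ {z} →
        ∃ i : Fin (k + 1), |z i| = (2 : ℤ) ^ (k - 1) := by
  have hD : D = boundary k := by
    refine (Pi.basisFun ℤ (Fin (k + 1))).ext fun ⟨i, hi⟩ => funext fun j => ?_
    rw [Pi.basisFun_apply]
    obtain rfl | hi0 := Nat.eq_zero_or_pos i
    · rw [hD0]
      simp [boundary, Pi.single_apply, Fin.ext_iff]
      split_ifs <;> omega
    obtain rfl | hik := eq_or_ne i k
    · rw [hDk]
      simp [boundary, Pi.single_apply, Fin.ext_iff]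
      omega
    rw [hDmid i hi0 (by omega)]
    simp [boundary, Pi.single_apply, Fin.ext_iff]
    split_ifs <;> omega
  have hker : LinearMap.ker D = ℤ ∙ boundaryCycle k := by
    rw [hD, ker_boundary (by omega)]
  have hcycle_zero : |boundaryCycle k ⟨0, by omega⟩| = 2 ^ (k - 1) := by
    simp [boundaryCycle]
  constructor
  · intro z hz hne
    obtain ⟨c, rfl⟩ := mem_span_singleton.mp (hker ▸ LinearMap.mem_ker.mpr hz)
    have hc : c ≠ 0 := by rintro rfl; exact hne (zero_smul ℤ _)
    calc (2 : ℤ) ^ (k - 1) ≤ |c| * 2 ^ (k - 1) :=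
          le_mul_of_one_le_left (by positivity) (Int.one_le_abs hc)
      _ = |(c • boundaryCycle k) ⟨0, by omega⟩| := by
          rw [Pi.smul_apply, smul_eq_mul, abs_mul, hcycle_zero]
  · intro z hz
    obtain ⟨u, hu⟩ := span_singleton_eq_span_singleton.mp (hker.symm.trans hz)
    refine ⟨⟨0, by omega⟩, ?_⟩
    rw [← hu, Pi.smul_apply, Units.smul_def, smul_eq_mul, abs_mul,
      Int.isUnit_iff_abs_eq.mp u.isUnit, one_mul, hcycle_zero]
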